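/- arXiv:1903.02896 — 3 statements merged into one kernel-verified Lean document; each statement's English description precedes it below -/
import Mathlib

section
/- For the full shift T on X = ∏_{n∈ℤ} M over a perfect Polish metric space M, the set C_X = {μ ∈ M(T) : supp(μ) = X} of invariant measures with full topological support is a dense Gδ subset of M(T). -/
open Filter MeasureTheory Topology Metric Set
open scoped ENNReal NNReal

noncomputable section
attribute [local instance] Classical.propDecidable

/-- The full (bilateral) shift on the product space `ℤ → M`: `(T x) i = x (i - 1)`. -/
def fullShift {M : Type*} (x : ℤ → M) : ℤ → M := fun i => x (i - 1)

/-- The metric `d(x,y) = ∑_{n ∈ ℤ} 2^{-|n|} ρ(xₙ,yₙ)/(1 + ρ(xₙ,yₙ))` on `ℤ → M`,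
compatible with the product topology. -/
def shiftDist {M : Type*} [MetricSpace M] (x y : ℤ → M) : ℝ :=
  ∑' n : ℤ, (1 / 2 : ℝ) ^ n.natAbs * (dist (x n) (y n) / (1 + dist (x n) (y n)))

/-- Lower local dimension `d̲_μ(x) = liminf_{ε → 0⁺} log μ(B(x,ε)) / log ε` of `μ` at `x`,
with respect to the distance function `d`; by convention it is `∞` if some ball
centered at `x` has measure zero. -/
def lowerLocalDim {X : Type*} [MeasurableSpace X] (d : X → X → ℝ)
    (μ : Measure X) (x : X) : ℝ≥0∞ :=
  if ∃ ε > 0, μ {y | d x y < ε} = 0 then ⊤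
  else liminf (fun ε : ℝ =>
    ENNReal.ofReal (Real.log (μ {y | d x y < ε}).toReal / Real.log ε)) (𝓝[>] (0 : ℝ))

/-- Upper local dimension `d̄_μ(x) = limsup_{ε → 0⁺} log μ(B(x,ε)) / log ε`. -/
def upperLocalDim {X : Type*} [MeasurableSpace X] (d : X → X → ℝ)
    (μ : Measure X) (x : X) : ℝ≥0∞ :=
  if ∃ ε > 0, μ {y | d x y < ε} = 0 then ⊤
  else limsup (fun ε : ℝ =>
    ENNReal.ofReal (Real.log (μ {y | d x y < ε}).toReal / Real.log ε)) (𝓝[>] (0 : ℝ))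

/-- The ratio `log τ_r(x) / (- log r)`, where `τ_r(x) = inf {n ≥ 1 | Tⁿ x ∈ B̄(x,r)}` is the
first return time of `x` to the closed ball `B̄(x,r)`; by convention it is `∞` when the
return time is infinite. -/
def recRatio {X : Type*} (d : X → X → ℝ) (T : X → X) (x : X) (r : ℝ) : ℝ≥0∞ :=
  if ∃ n : ℕ, 1 ≤ n ∧ d (T^[n] x) x ≤ r then
    ENNReal.ofReal
      (Real.log ((sInf {n : ℕ | 1 ≤ n ∧ d (T^[n] x) x ≤ r} : ℕ) : ℝ) / (- Real.log r))
  else ⊤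

/-- Lower recurrence rate `R̲(x) = liminf_{r → 0⁺} log τ_r(x) / (- log r)`. -/
def lowerRecRate {X : Type*} (d : X → X → ℝ) (T : X → X) (x : X) : ℝ≥0∞ :=
  liminf (recRatio d T x) (𝓝[>] (0 : ℝ))

/-- Upper recurrence rate `R̄(x) = limsup_{r → 0⁺} log τ_r(x) / (- log r)`. -/
def upperRecRate {X : Type*} (d : X → X → ℝ) (T : X → X) (x : X) : ℝ≥0∞ :=
  limsup (recRatio d T x) (𝓝[>] (0 : ℝ))

/-- The ratio `log τ_r(x,y) / (- log r)`, where `τ_r(x,y) = inf {n ≥ 1 | Tⁿ x ∈ B̄(y,r)}` is the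
first entrance time of the orbit of `x` into the closed ball `B̄(y,r)`; by convention `∞`
when the entrance time is infinite. -/
def waitRatio {X : Type*} (d : X → X → ℝ) (T : X → X) (x y : X) (r : ℝ) : ℝ≥0∞ :=
  if ∃ n : ℕ, 1 ≤ n ∧ d (T^[n] x) y ≤ r then
    ENNReal.ofReal
      (Real.log ((sInf {n : ℕ | 1 ≤ n ∧ d (T^[n] x) y ≤ r} : ℕ) : ℝ) / (- Real.log r))
  else ⊤

/-- Lower quantitative waiting time indicator `R̲(x,y)`. -/
def lowerWaitRate {X : Type*} (d : X → X → ℝ) (T : X → X) (x y : X) : ℝ≥0∞ :=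
  liminf (waitRatio d T x y) (𝓝[>] (0 : ℝ))

/-- Upper quantitative waiting time indicator `R̄(x,y)`. -/
def upperWaitRate {X : Type*} (d : X → X → ℝ) (T : X → X) (x y : X) : ℝ≥0∞ :=
  limsup (waitRatio d T x y) (𝓝[>] (0 : ℝ))

/-- The entropy `H(P) = ∑_c -μ(P_c) log μ(P_c)` of the finite measurable partition
`P_c = f ⁻¹ {c}` of `X` induced by a map `f` into a finite set. -/
def partitionEntropy {X F : Type*} [MeasurableSpace X] [Fintype F]
    (μ : Measure X) (f : X → F) : ℝ :=
  ∑ c : F, Real.negMulLog ((μ (f ⁻¹' {c})).toReal)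

/-- The Kolmogorov–Sinai (measure-theoretic) entropy `h_μ(T)`: the supremum, over all finite
measurable partitions (coded by measurable maps `f : X → Fin k`), of the limit of
`H(⋁_{i<n} T⁻ⁱ P) / n`. -/
def kolmogorovSinaiEntropy {X : Type*} [MeasurableSpace X] (T : X → X) (μ : Measure X) :
    ℝ≥0∞ :=
  ⨆ (k : ℕ) (f : X → Fin k) (_ : Measurable f),
    ENNReal.ofReal
      (liminf (fun n : ℕ =>
        partitionEntropy μ (fun x (i : Fin n) => f (T^[(i : ℕ)] x)) / n) atTop)

end

/-! Positivity of `μ U` for a fixed open `U` is an open condition on `μ` in the weak topology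
(portmanteau), so with a countable base full support is a countable intersection of open
conditions. For density, push a geometric law forward along a dense sequence of `M` to get a
probability measure `m` of full support on `M`: the Bernoulli measure `m^ℤ` is shift-invariant
and of full support, and for an invariant `μ` the invariant mixtures `(1 - ε) μ + ε m^ℤ` have
full support and tend to `μ` as `ε → 0`. -/

namespace MeasureTheory

namespace ProbabilityMeasure

section ConvexComb

variable {Ω : Type*} [MeasurableSpace Ω]

noncomputable def convexComb (μ ν : ProbabilityMeasure Ω) (ε : ℝ≥0∞) (hε : ε ≤ 1) :
    ProbabilityMeasure Ω :=
  ⟨(1 - ε) • μ.toMeasure + ε • ν.toMeasure, ⟨by simp [tsub_add_cancel_of_le hε]⟩⟩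

theorem map_convexComb {f : Ω → Ω} (hf : Measurable f) {μ ν : ProbabilityMeasure Ω}
    (hμ : μ.toMeasure.map f = μ.toMeasure) (hν : ν.toMeasure.map f = ν.toMeasure)
    (ε : ℝ≥0∞) (hε : ε ≤ 1) :
    (convexComb μ ν ε hε).toMeasure.map f = (convexComb μ ν ε hε).toMeasure := by
  simp only [convexComb, coe_mk, Measure.map_add _ _ hf, Measure.map_smul, hμ, hν]

theorem isOpenPosMeasure_convexComb [TopologicalSpace Ω] (μ : ProbabilityMeasure Ω)
    {ν : ProbabilityMeasure Ω} [ν.toMeasure.IsOpenPosMeasure] {ε : ℝ≥0∞} (hε₀ : ε ≠ 0)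
    (hε : ε ≤ 1) : (convexComb μ ν ε hε).toMeasure.IsOpenPosMeasure :=
  have := ν.toMeasure.isOpenPosMeasure_smul hε₀
  (Measure.le_add_left le_rfl : ε • ν.toMeasure ≤ _).isOpenPosMeasure

variable [TopologicalSpace Ω] [OpensMeasurableSpace Ω]

theorem tendsto_convexComb {ι : Type*} {L : Filter ι} (μ ν : ProbabilityMeasure Ω)
    {ε : ι → ℝ≥0∞} (hε : ∀ i, ε i ≤ 1) (hε₀ : Tendsto ε L (𝓝 0)) :
    Tendsto (fun i => convexComb μ ν (ε i) (hε i)) L (𝓝 μ) := by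
  refine tendsto_iff_forall_lintegral_tendsto.2 fun f => ?_
  simp only [convexComb, coe_mk, lintegral_add_measure, lintegral_smul_measure, smul_eq_mul]
  have hμf := (f.lintegral_lt_top_of_nnreal μ.toMeasure).ne
  have hνf := (f.lintegral_lt_top_of_nnreal ν.toMeasure).ne
  have h1 : Tendsto (fun i => 1 - ε i) L (𝓝 1) := by
    simpa using ENNReal.Tendsto.sub tendsto_const_nhds hε₀ (Or.inl ENNReal.one_ne_top)
  simpa using (ENNReal.Tendsto.mul_const h1 (Or.inr hμf)).add
    (ENNReal.Tendsto.mul_const hε₀ (Or.inr hνf))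

theorem dense_setOf_isOpenPosMeasure_of_invariant {f : Ω → Ω} (hf : Measurable f)
    {ν : ProbabilityMeasure Ω} [ν.toMeasure.IsOpenPosMeasure]
    (hν : ν.toMeasure.map f = ν.toMeasure) :
    Dense {μ : {μ : ProbabilityMeasure Ω // μ.toMeasure.map f = μ.toMeasure} |
      μ.1.toMeasure.IsOpenPosMeasure} := by
  intro μ
  have hε (n : ℕ) : ((n + 1 : ℕ) : ℝ≥0∞)⁻¹ ≤ 1 := ENNReal.inv_le_one.2 (by simp)
  have hε₀ : Tendsto (fun n : ℕ => ((n + 1 : ℕ) : ℝ≥0∞)⁻¹) atTop (𝓝 0) :=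
    ENNReal.tendsto_inv_nat_nhds_zero.comp (tendsto_add_atTop_nat 1)
  refine mem_closure_of_tendsto (f := fun n : ℕ =>
      ⟨convexComb μ.1 ν _ (hε n), map_convexComb hf μ.2 hν _ (hε n)⟩)
    (tendsto_subtype_rng.2 (tendsto_convexComb μ.1 ν hε hε₀)) (.of_forall fun n => ?_)
  exact isOpenPosMeasure_convexComb μ.1 (by simp) (hε n)

end ConvexComb

section Support

variable {Ω : Type*} [MeasurableSpace Ω] [TopologicalSpace Ω] [OpensMeasurableSpace Ω]
  [HasOuterApproxClosed Ω]

theorem lowerSemicontinuous_apply_of_isOpen {U : Set Ω} (hU : IsOpen U) :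
    LowerSemicontinuous fun μ : ProbabilityMeasure Ω => μ.toMeasure U :=
  lowerSemicontinuous_iff_le_liminf.2 fun _ => le_liminf_measure_open_of_tendsto tendsto_id hU

theorem isGδ_setOf_isOpenPosMeasure [SecondCountableTopology Ω] :
    IsGδ {μ : ProbabilityMeasure Ω | μ.toMeasure.IsOpenPosMeasure} := by
  obtain ⟨b, hbc, hb_empty, hb⟩ := TopologicalSpace.exists_countable_basis Ω
  have hb_inter : {μ : ProbabilityMeasure Ω | μ.toMeasure.IsOpenPosMeasure} =
      ⋂ U ∈ b, {μ | 0 < μ.toMeasure U} := by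
    ext μ
    simp only [mem_iInter, mem_ofPred_eq]
    refine ⟨fun _ U hU => (hb.isOpen hU).measure_pos _ (nonempty_iff_ne_empty.2
      fun h => hb_empty (h ▸ hU)), fun h => ⟨fun V hV ⟨x, hx⟩ => ?_⟩⟩
    obtain ⟨U, hUb, -, hUV⟩ := hb.exists_subset_of_mem_open hx hV
    exact ((h U hUb).trans_le (measure_mono hUV)).ne'
  rw [hb_inter]
  exact .biInter hbc fun U hU =>
    ((lowerSemicontinuous_apply_of_isOpen (hb.isOpen hU)).isOpen_preimage 0).isGδ

end Support

end ProbabilityMeasure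

section FullSupport

variable {X : Type*} [TopologicalSpace X] [MeasurableSpace X] [OpensMeasurableSpace X]

theorem _root_.DenseRange.isOpenPosMeasure_map {α : Type*} [MeasurableSpace α] [Countable α]
    [MeasurableSingletonClass α] {d : α → X} (hd : DenseRange d) {μ : Measure α}
    (hμ : ∀ a, μ {a} ≠ 0) : (μ.map d).IsOpenPosMeasure := by
  refine ⟨fun U hU hne => ?_⟩
  obtain ⟨a, ha⟩ := hd.exists_mem_open hU hne
  rw [Measure.map_apply (measurable_of_countable d) hU.measurableSet]
  exact (measure_pos_of_superset (singleton_subset_iff.2 ha : {a} ⊆ d ⁻¹' U) (hμ a)).ne'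

open ProbabilityTheory in
theorem exists_isProbabilityMeasure_isOpenPosMeasure [TopologicalSpace.SeparableSpace X]
    [Nonempty X] : ∃ μ : Measure X, IsProbabilityMeasure μ ∧ μ.IsOpenPosMeasure := by
  obtain ⟨d, hd⟩ := TopologicalSpace.exists_dense_seq X
  let p : unitInterval := ⟨1 / 2, by norm_num, by norm_num⟩
  have hp₀ : p ≠ 0 := fun h => by norm_num [p, Subtype.ext_iff] at h
  have hp₁ : p ≠ 1 := fun h => by norm_num [p, Subtype.ext_iff] at h
  refine ⟨(geometricMeasure p).map d, Measure.isProbabilityMeasure_map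
    (measurable_of_countable d).aemeasurable, hd.isOpenPosMeasure_map fun n => ?_⟩
  rw [geometricMeasure_singleton hp₀]
  exact ENNReal.ofReal_pos.2 (geometricMeasure_pos hp₀ hp₁ n) |>.ne'

theorem Measure.isOpenPosMeasure_infinitePi {ι : Type*} {X : ι → Type*}
    [∀ i, TopologicalSpace (X i)] [∀ i, MeasurableSpace (X i)] [∀ i, OpensMeasurableSpace (X i)]
    (μ : ∀ i, Measure (X i)) [∀ i, IsProbabilityMeasure (μ i)] [∀ i, (μ i).IsOpenPosMeasure] :
    (Measure.infinitePi μ).IsOpenPosMeasure := by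
  refine ⟨fun U hU ⟨x, hx⟩ => ?_⟩
  obtain ⟨I, u, hu, hIU⟩ := isOpen_pi_iff.1 hU x hx
  refine (measure_pos_of_superset hIU ?_).ne'
  rw [Measure.infinitePi_pi μ fun i hi => (hu i hi).1.measurableSet]
  exact Finset.prod_ne_zero_iff.2 fun i hi => (hu i hi).1.measure_ne_zero _ ⟨x i, (hu i hi).2⟩

end FullSupport

end MeasureTheory

section Shift

theorem fullShift_eq_piCongrLeft {M : Type*} :
    (fullShift : (ℤ → M) → ℤ → M) = Equiv.piCongrLeft (fun _ => M) (Equiv.addRight 1) := by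
  ext x i
  simp [fullShift, Equiv.piCongrLeft_apply_eq_cast, sub_eq_add_neg]

variable {M : Type*} [MeasurableSpace M]

theorem measurable_fullShift : Measurable (fullShift : (ℤ → M) → ℤ → M) :=
  measurable_pi_lambda _ fun i => measurable_pi_apply (i - 1)

theorem map_fullShift_infinitePi (m : Measure M) [IsProbabilityMeasure m] :
    (Measure.infinitePi fun _ : ℤ => m).map fullShift = Measure.infinitePi fun _ => m := by
  rw [fullShift_eq_piCongrLeft]
  exact Measure.infinitePi_map_piCongrLeft (fun _ => m) _

end Shift

theorem fullShift_fullSupport_denseGδ_general {M : Type*} [MetricSpace M]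
    [TopologicalSpace.SeparableSpace M]
    [MeasurableSpace M] [BorelSpace M] :
    IsGδ {μ : {ν : ProbabilityMeasure (ℤ → M) // ν.toMeasure.map fullShift = ν.toMeasure} |
        μ.1.toMeasure.IsOpenPosMeasure} ∧
    Dense {μ : {ν : ProbabilityMeasure (ℤ → M) // ν.toMeasure.map fullShift = ν.toMeasure} |
        μ.1.toMeasure.IsOpenPosMeasure} := by
  constructor
  · exact ProbabilityMeasure.isGδ_setOf_isOpenPosMeasure.preimage (f := Subtype.val)
      continuous_subtype_val
  · intro μ
    have : Nonempty M := ⟨μ.1.nonempty.some 0⟩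
    obtain ⟨m, _, _⟩ := exists_isProbabilityMeasure_isOpenPosMeasure (X := M)
    let bernoulli : ProbabilityMeasure (ℤ → M) := ⟨Measure.infinitePi fun _ => m, inferInstance⟩
    have : bernoulli.toMeasure.IsOpenPosMeasure := Measure.isOpenPosMeasure_infinitePi _
    exact ProbabilityMeasure.dense_setOf_isOpenPosMeasure_of_invariant (ν := bernoulli)
      measurable_fullShift (map_fullShift_infinitePi m) μ

/-- For the full shift on `ℤ → M` over a perfect Polish metric space `M`,
the set of invariant measures with full topological support (equivalently, giving positive
measure to every nonempty open set) is a dense `Gδ` subset of `M(T)`. -/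
theorem fullShift_fullSupport_denseGδ {M : Type*} [MetricSpace M] [CompleteSpace M]
    [TopologicalSpace.SeparableSpace M] [PerfectSpace M]
    [MeasurableSpace M] [BorelSpace M] :
    IsGδ {μ : {ν : ProbabilityMeasure (ℤ → M) // ν.toMeasure.map fullShift = ν.toMeasure} |
        μ.1.toMeasure.IsOpenPosMeasure} ∧
    Dense {μ : {ν : ProbabilityMeasure (ℤ → M) // ν.toMeasure.map fullShift = ν.toMeasure} |
        μ.1.toMeasure.IsOpenPosMeasure} :=
  fullShift_fullSupport_denseGδ_general
end

section
/- Let μ be a Borel probability measure on a Polish metric space X. Then the μ-essential infimum of the lower local dimension d̲_μ equals dim_H^-(μ) = inf{dim_H(E) : E Borel, μ(E) > 0}, and the μ-essential supremum of d̲_μ equals dim_H^+(μ) = inf{dim_H(E) : E Borel, μ(X∖E) = 0}; in particular dim_H^-(μ) ≤ dim_H^+(μ). -/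
open Filter MeasureTheory Topology Metric Set
open scoped ENNReal NNReal

noncomputable section
attribute [local instance] Classical.propDecidable

end

/-!
Lower bounds on dimension come from the mass distribution principle: where `d̲_μ > s`, balls
of small radius `ε` have measure at most `ε ^ s`, so on a set of positive measure `μ` is
dominated by `μH[s]`. Upper bounds come from the Vitali covering lemma: if `d̲_μ < t` on `A`,
every point of `A` is the centre of arbitrarily small balls `B(x, r)` with `μ (B(x, r)) ≥ r ^ t`;
the enlargements of a disjoint subfamily cover `A`, whence `μH[t] A ≤ 8 ^ t μ X`.
Since `d̲_μ` need not be measurable, the sublevel sets `{d̲_μ < t}` are replaced by Borel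
hulls taken with respect to a Hausdorff measure, which have the same dimension bound.
-/

lemma setOf_dist_lt_eq_ball {X : Type*} [PseudoMetricSpace X] (x : X) (ε : ℝ) :
    {y | dist x y < ε} = ball x ε := by
  ext y
  exact mem_ball'.symm

section LocalDimension

variable {X : Type*} [MetricSpace X] [MeasurableSpace X] {μ : Measure X} {x : X}

lemma lowerLocalDim_dist_of_forall_measure_ball_ne_zero (h : ∀ ε > 0, μ (ball x ε) ≠ 0) :
    lowerLocalDim dist μ x =
      liminf (fun ε => ENNReal.ofReal (Real.logb ε (μ (ball x ε)).toReal)) (𝓝[>] 0) := by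
  rw [lowerLocalDim, if_neg (by simpa [setOf_dist_lt_eq_ball] using h)]
  simp only [setOf_dist_lt_eq_ball, Real.log_div_log]

theorem eventually_measure_ball_le_of_lt_lowerLocalDim [IsFiniteMeasure μ] {a : ℝ≥0}
    (h : (a : ℝ≥0∞) < lowerLocalDim dist μ x) :
    ∀ᶠ ε in 𝓝[>] 0, μ (ball x ε) ≤ ENNReal.ofReal (ε ^ (a : ℝ)) := by
  by_cases hnull : ∃ ε > 0, μ (ball x ε) = 0
  · obtain ⟨ε₀, hε₀, hμ⟩ := hnull
    filter_upwards [Ioo_mem_nhdsGT hε₀] with ε hε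
    rw [measure_mono_null (ball_subset_ball hε.2.le) hμ]
    exact zero_le
  push Not at hnull
  rw [lowerLocalDim_dist_of_forall_measure_ball_ne_zero hnull] at h
  filter_upwards [eventually_lt_of_lt_liminf h, Ioo_mem_nhdsGT one_pos] with ε hlt hε
  have hpos : 0 < (μ (ball x ε)).toReal :=
    ENNReal.toReal_pos (hnull ε hε.1) (measure_ne_top _ _)
  rw [← ENNReal.ofReal_coe_nnreal] at hlt
  have hlt' := (Real.lt_logb_iff_rpow_lt_of_base_lt_one hε.1 hε.2 hpos).1
    ((ENNReal.ofReal_lt_ofReal_iff_of_nonneg a.2).1 hlt)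
  exact (ENNReal.le_ofReal_iff_toReal_le (measure_ne_top _ _)
    (Real.rpow_nonneg hε.1.le _)).2 hlt'.le

theorem frequently_le_measure_ball_of_lowerLocalDim_lt [IsFiniteMeasure μ] {t : ℝ≥0}
    (h : lowerLocalDim dist μ x < t) :
    ∃ᶠ ε in 𝓝[>] 0, ENNReal.ofReal (ε ^ (t : ℝ)) ≤ μ (ball x ε) := by
  have hball : ∀ ε > 0, μ (ball x ε) ≠ 0 := by
    intro ε hε hμ
    rw [lowerLocalDim, if_pos ⟨ε, hε, by rwa [setOf_dist_lt_eq_ball]⟩] at h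
    exact not_top_lt h
  rw [lowerLocalDim_dist_of_forall_measure_ball_ne_zero hball] at h
  refine ((frequently_lt_of_liminf_lt (by isBoundedDefault) h).and_eventually
    (Ioo_mem_nhdsGT one_pos)).mono fun ε ⟨hlt, hε⟩ => ?_
  have hpos : 0 < (μ (ball x ε)).toReal := ENNReal.toReal_pos (hball ε hε.1) (measure_ne_top _ _)
  rw [← ENNReal.ofReal_coe_nnreal] at hlt
  have hlt' := (Real.logb_lt_iff_lt_rpow_of_base_lt_one hε.1 hε.2 hpos).1
    (ENNReal.ofReal_lt_ofReal_iff'.1 hlt).1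
  exact (ENNReal.ofReal_le_iff_le_toReal (measure_ne_top _ _)).2 hlt'.le

end LocalDimension

section HausdorffDimension

variable {X : Type*} [MetricSpace X] [MeasurableSpace X] [BorelSpace X]

theorem measure_le_hausdorffMeasure_of_forall_measure_ball_le (μ : Measure X) {s : ℝ}
    (hs : 0 ≤ s) {A : Set X} {δ : ℝ} (hδ : 0 < δ)
    (h : ∀ x ∈ A, ∀ ε ∈ Ioo 0 δ, μ (ball x ε) ≤ ENNReal.ofReal (ε ^ s)) :
    μ A ≤ μH[s] A := by
  have hsmall : ∀ t : Set X, ediam t ≤ ENNReal.ofReal (δ / 2) → μ (t ∩ A) ≤ ediam t ^ s := by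
    intro t ht
    rcases (t ∩ A).eq_empty_or_nonempty with he | ⟨x, hxt, hxA⟩
    · simp [he]
    have hne : ediam t ≠ ⊤ := ne_top_of_le_ne_top ENNReal.ofReal_ne_top ht
    have hdδ : diam t < δ :=
      (ENNReal.toReal_le_of_le_ofReal (by positivity) ht).trans_lt (by linarith)
    have hball : ∀ᶠ η in 𝓝[>] diam t, μ (t ∩ A) ≤ ENNReal.ofReal (η ^ s) := by
      filter_upwards [Ioo_mem_nhdsGT hdδ] with η hη
      have hsub : t ⊆ ball x η := fun y hy =>
        (dist_le_diam_of_mem (isBounded_iff_ediam_ne_top.2 hne) hy hxt).trans_lt hη.1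
      exact (measure_mono (inter_subset_left.trans hsub)).trans
        (h x hxA η ⟨diam_nonneg.trans_lt hη.1, hη.2⟩)
    have hlim : Tendsto (fun η => ENNReal.ofReal (η ^ s)) (𝓝[>] diam t)
        (𝓝 (ENNReal.ofReal (diam t ^ s))) :=
      ((ENNReal.continuous_ofReal.comp (Real.continuous_rpow_const hs)).tendsto _).mono_left
        nhdsWithin_le_nhds
    rw [← ENNReal.ofReal_toReal hne, ENNReal.ofReal_rpow_of_nonneg ENNReal.toReal_nonneg hs]
    exact ge_of_tendsto hlim hball
  have hle := OuterMeasure.le_mkMetric (fun r => r ^ s) (μ.toOuterMeasure.restrict A)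
    (ENNReal.ofReal (δ / 2)) (by simpa using hδ) fun t ht => by simpa using hsmall t ht
  simpa [Measure.hausdorffMeasure, OuterMeasure.coe_mkMetric] using hle A

theorem le_dimH_of_forall_eventually_measure_ball_le (μ : Measure X) {s : ℝ≥0} {F : Set X}
    (hF : μ F ≠ 0) (h : ∀ x ∈ F, ∀ᶠ ε in 𝓝[>] 0, μ (ball x ε) ≤ ENNReal.ofReal (ε ^ (s : ℝ))) :
    (s : ℝ≥0∞) ≤ dimH F := by
  set A : ℕ → Set X := fun n =>
    {x ∈ F | ∀ ε ∈ Ioo 0 (1 / (n + 1 : ℝ)), μ (ball x ε) ≤ ENNReal.ofReal (ε ^ (s : ℝ))}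
  have hFA : F ⊆ ⋃ n, A n := by
    intro x hx
    obtain ⟨δ, hδ, hsub⟩ := mem_nhdsGT_iff_exists_Ioo_subset.1 (h x hx)
    obtain ⟨n, hn⟩ := exists_nat_one_div_lt (mem_Ioi.1 hδ)
    exact mem_iUnion.2 ⟨n, hx, fun ε hε => hsub ⟨hε.1, hε.2.trans hn⟩⟩
  obtain ⟨n, hn⟩ : ∃ n, μ (A n) ≠ 0 := by
    by_contra! hA
    exact hF (measure_mono_null hFA (measure_iUnion_null hA))
  have hμH : μH[s] (A n) ≠ 0 := fun h0 => hn <| le_antisymm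
    ((measure_le_hausdorffMeasure_of_forall_measure_ball_le μ s.2 Nat.one_div_pos_of_nat
      fun x hx => hx.2).trans_eq h0) zero_le
  exact (le_dimH_of_hausdorffMeasure_ne_zero hμH).trans (dimH_mono fun x hx => hx.1)

theorem exists_countable_closedBall_cover_tsum_rpow_le (μ : Measure X) [SFinite μ] {s : ℝ}
    {A : Set X} (h : ∀ x ∈ A, ∃ᶠ ε in 𝓝[>] 0, ENNReal.ofReal (ε ^ s) ≤ μ (ball x ε))
    {δ : ℝ} (hδ : 0 < δ) :
    ∃ (u : Set X) (r : X → ℝ), u.Countable ∧ (A ⊆ ⋃ x ∈ u, closedBall x (4 * r x)) ∧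
      (∀ x ∈ u, 0 < r x ∧ r x ≤ δ) ∧ ∑' x : u, ENNReal.ofReal (r x ^ s) ≤ μ univ := by
  have hrad : ∀ x ∈ A, ∃ ε ∈ Ioo 0 δ, ENNReal.ofReal (ε ^ s) ≤ μ (ball x ε) := fun x hx =>
    ((h x hx).and_eventually (Ioo_mem_nhdsGT hδ)).exists.imp fun ε hε => ⟨hε.2, hε.1⟩
  choose! r hr hrμ using hrad
  obtain ⟨u, huA, hdisj, hcov⟩ :=
    Vitali.exists_disjoint_subfamily_covering_enlargement_closedBall A id r δ
      (fun x hx => (hr x hx).2.le) 4 (by norm_num)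
  have hball_disj : Pairwise (Function.onFun Disjoint fun x : u => ball (x : X) (r x)) :=
    fun x y hxy => (hdisj x.2 y.2 (Subtype.coe_ne_coe.2 hxy)).mono
      ball_subset_closedBall ball_subset_closedBall
  have hball_pos : ∀ x ∈ u, 0 < μ (ball x (r x)) := fun x hx =>
    (ENNReal.ofReal_pos.2 (Real.rpow_pos_of_pos (hr x (huA hx)).1 s)).trans_le (hrμ x (huA hx))
  refine ⟨u, r, ?_, fun x hx => ?_, fun x hx => ⟨(hr x (huA hx)).1, (hr x (huA hx)).2.le⟩, ?_⟩
  · -- countable because the disjoint balls all have positive measure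
    have hcount := Measure.countable_meas_pos_of_disjoint_iUnion (μ := μ)
      (fun _ => measurableSet_ball) hball_disj
    exact countable_coe_iff.1 (countable_univ_iff.1 (hcount.mono fun x _ => hball_pos x x.2))
  · obtain ⟨y, hy, hsub⟩ := hcov x hx
    exact mem_biUnion hy (hsub (mem_closedBall_self (hr x hx).1.le))
  · calc ∑' x : u, ENNReal.ofReal (r x ^ s) ≤ ∑' x : u, μ (ball x (r x)) :=
          ENNReal.tsum_le_tsum fun x => hrμ x (huA x.2)
      _ ≤ μ (⋃ x : u, ball x (r x)) :=
          tsum_meas_le_meas_iUnion_of_disjoint μ (fun _ => measurableSet_ball) hball_disj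
      _ ≤ μ univ := measure_mono (subset_univ _)

theorem hausdorffMeasure_le_of_forall_frequently_le_measure_ball (μ : Measure X) [SFinite μ]
    {s : ℝ} (hs : 0 ≤ s) {A : Set X}
    (h : ∀ x ∈ A, ∃ᶠ ε in 𝓝[>] 0, ENNReal.ofReal (ε ^ s) ≤ μ (ball x ε)) :
    μH[s] A ≤ ENNReal.ofReal (8 ^ s) * μ univ := by
  choose u r hu_count hu_cover hr hu_sum using fun n : ℕ =>
    exists_countable_closedBall_cover_tsum_rpow_le μ h (Nat.one_div_pos_of_nat (n := n))
  have := fun n => (hu_count n).to_subtype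
  have hdiam : ∀ n x, ediam (closedBall x (4 * r n x)) ≤ ENNReal.ofReal (8 * r n x) :=
    fun n x => by
      rw [show 8 * r n x = 4 * r n x + 4 * r n x by ring]
      exact ediam_le_of_forall_dist_le fun y hy z hz =>
        (dist_triangle_right y z x).trans (add_le_add hy hz)
  have hr_lim : Tendsto (fun n : ℕ => ENNReal.ofReal (8 * (1 / (n + 1 : ℝ)))) atTop (𝓝 0) := by
    simpa using ENNReal.tendsto_ofReal
      ((tendsto_one_div_add_atTop_nhds_zero_nat (𝕜 := ℝ)).const_mul 8)
  refine (Measure.hausdorffMeasure_le_liminf_tsum s A _ hr_lim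
    (fun n (x : u n) => closedBall (x : X) (4 * r n x))
    (Eventually.of_forall fun n x => (hdiam n x).trans
      (ENNReal.ofReal_le_ofReal (by linarith [(hr n x x.2).2])))
    (Eventually.of_forall fun n => by simpa only [biUnion_eq_iUnion] using hu_cover n)).trans
    (liminf_le_of_frequently_le' (Frequently.of_forall fun n => ?_))
  calc ∑' x : u n, ediam (closedBall (x : X) (4 * r n x)) ^ s
      ≤ ∑' x : u n, ENNReal.ofReal (8 ^ s) * ENNReal.ofReal (r n x ^ s) := by
        refine ENNReal.tsum_le_tsum fun x => ?_
        have hrx := (hr n x x.2).1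
        refine (ENNReal.rpow_le_rpow (hdiam n x) hs).trans_eq ?_
        rw [ENNReal.ofReal_rpow_of_nonneg (by positivity) hs, Real.mul_rpow (by norm_num) hrx.le,
          ENNReal.ofReal_mul (by positivity)]
    _ = ENNReal.ofReal (8 ^ s) * ∑' x : u n, ENNReal.ofReal (r n x ^ s) := ENNReal.tsum_mul_left
    _ ≤ ENNReal.ofReal (8 ^ s) * μ univ := mul_le_mul_right (hu_sum n) _

theorem dimH_le_of_forall_frequently_le_measure_ball (μ : Measure X) [IsFiniteMeasure μ]
    {t : ℝ≥0} {A : Set X}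
    (h : ∀ x ∈ A, ∃ᶠ ε in 𝓝[>] 0, ENNReal.ofReal (ε ^ (t : ℝ)) ≤ μ (ball x ε)) :
    dimH A ≤ t :=
  dimH_le_of_hausdorffMeasure_ne_top <| ne_top_of_le_ne_top
    (ENNReal.mul_ne_top ENNReal.ofReal_ne_top (measure_ne_top μ univ))
    (hausdorffMeasure_le_of_forall_frequently_le_measure_ball μ t.2 h)

theorem exists_measurableSet_superset_dimH_le {A : Set X} {c : ℝ≥0∞} (h : dimH A < c) :
    ∃ E, A ⊆ E ∧ MeasurableSet E ∧ dimH E ≤ c := by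
  obtain ⟨t, hAt, htc⟩ := ENNReal.lt_iff_exists_nnreal_btwn.1 h
  refine ⟨toMeasurable μH[t] A, subset_toMeasurable _ _, measurableSet_toMeasurable _ _,
    (dimH_le_of_hausdorffMeasure_ne_top ?_).trans htc.le⟩
  rw [measure_toMeasurable, hausdorffMeasure_of_dimH_lt hAt]
  exact ENNReal.zero_ne_top

end HausdorffDimension

section LowerLocalDimension

variable {X : Type*} [MetricSpace X] [MeasurableSpace X] [BorelSpace X]
  (μ : Measure X) [IsFiniteMeasure μ]

theorem dimH_le_of_forall_lowerLocalDim_le {A : Set X} {c : ℝ≥0∞}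
    (h : ∀ x ∈ A, lowerLocalDim dist μ x ≤ c) : dimH A ≤ c := by
  by_contra! hlt
  obtain ⟨t, hct, htA⟩ := ENNReal.lt_iff_exists_nnreal_btwn.1 hlt
  exact htA.not_ge (dimH_le_of_forall_frequently_le_measure_ball μ fun x hx =>
    frequently_le_measure_ball_of_lowerLocalDim_lt ((h x hx).trans_lt hct))

theorem le_dimH_of_forall_lt_measure_inter_ne_zero {E : Set X} {c : ℝ≥0∞}
    (h : ∀ a < c, μ (E ∩ {x | a < lowerLocalDim dist μ x}) ≠ 0) : c ≤ dimH E :=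
  ENNReal.le_of_forall_nnreal_lt fun a ha =>
    (le_dimH_of_forall_eventually_measure_ball_le μ (h a ha) fun _ hx =>
      eventually_measure_ball_le_of_lt_lowerLocalDim hx.2).trans (dimH_mono inter_subset_left)

theorem essInf_lowerLocalDim_eq_iInf_dimH :
    essInf (lowerLocalDim dist μ) μ =
      ⨅ (E : Set X) (_ : MeasurableSet E) (_ : 0 < μ E), dimH E := by
  refine le_antisymm (le_iInf₂ fun E _ => le_iInf fun hE =>
    le_dimH_of_forall_lt_measure_inter_ne_zero μ fun a ha => ?_) ?_
  · rw [measure_inter_conull (ae_lt_of_lt_essInf ha)]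
    exact hE.ne'
  refine le_of_forall_gt_imp_ge_of_dense fun c hc => ?_
  obtain ⟨t, hinf, htc⟩ := exists_between hc
  have hA : μ {x | lowerLocalDim dist μ x < t} ≠ 0 :=
    frequently_ae_iff.1 (frequently_lt_of_liminf_lt (by isBoundedDefault) hinf)
  obtain ⟨E, hAE, hE, hdim⟩ := exists_measurableSet_superset_dimH_le
    ((dimH_le_of_forall_lowerLocalDim_le μ fun _ hx => le_of_lt hx).trans_lt htc)
  exact iInf₂_le_of_le E hE
    (iInf_le_of_le ((pos_iff_ne_zero.2 hA).trans_le (measure_mono hAE)) hdim)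

theorem essSup_lowerLocalDim_eq_iInf_dimH :
    essSup (lowerLocalDim dist μ) μ =
      ⨅ (E : Set X) (_ : MeasurableSet E) (_ : μ Eᶜ = 0), dimH E := by
  refine le_antisymm (le_iInf₂ fun E _ => le_iInf fun hE =>
    le_dimH_of_forall_lt_measure_inter_ne_zero μ fun a ha => ?_) ?_
  · rw [inter_comm, measure_inter_conull hE]
    exact frequently_ae_iff.1 (frequently_lt_of_lt_limsup (by isBoundedDefault) ha)
  set N := toMeasurable μ {x | essSup (lowerLocalDim dist μ) μ < lowerLocalDim dist μ x}
  have hN : μ Nᶜᶜ = 0 := by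
    rw [compl_compl, measure_toMeasurable]
    exact meas_essSup_lt
  exact iInf₂_le_of_le Nᶜ (measurableSet_toMeasurable _ _).compl <| iInf_le_of_le hN <|
    dimH_le_of_forall_lowerLocalDim_le μ fun x hx =>
      not_lt.1 fun hlt => hx (subset_toMeasurable _ _ hlt)

end LowerLocalDimension

theorem essInf_essSup_lowerLocalDim_eq_hausdorffDims_general {X : Type*} [MetricSpace X]
    [MeasurableSpace X] [BorelSpace X]
    (μ : Measure X) [IsProbabilityMeasure μ] :
    (essInf (lowerLocalDim dist μ) μ
        = ⨅ (E : Set X) (_ : MeasurableSet E) (_ : 0 < μ E), dimH E) ∧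
    (essSup (lowerLocalDim dist μ) μ
        = ⨅ (E : Set X) (_ : MeasurableSet E) (_ : μ Eᶜ = 0), dimH E) ∧
    ((⨅ (E : Set X) (_ : MeasurableSet E) (_ : 0 < μ E), dimH E)
        ≤ ⨅ (E : Set X) (_ : MeasurableSet E) (_ : μ Eᶜ = 0), dimH E) := by
  rw [← essInf_lowerLocalDim_eq_iInf_dimH, ← essSup_lowerLocalDim_eq_iInf_dimH]
  exact ⟨rfl, rfl, liminf_le_limsup⟩

/-- For a Borel probability measure `μ` on a Polish metric space `X`, the
`μ`-essential infimum of the lower local dimension equals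
`dim_H^-(μ) = inf {dim_H E : E Borel, μ E > 0}`, the `μ`-essential supremum of the lower
local dimension equals `dim_H^+(μ) = inf {dim_H E : E Borel, μ Eᶜ = 0}`; in particular
`dim_H^-(μ) ≤ dim_H^+(μ)`. -/
theorem essInf_essSup_lowerLocalDim_eq_hausdorffDims {X : Type*} [MetricSpace X]
    [CompleteSpace X] [TopologicalSpace.SeparableSpace X]
    [MeasurableSpace X] [BorelSpace X]
    (μ : Measure X) [IsProbabilityMeasure μ] :
    (essInf (lowerLocalDim dist μ) μ
        = ⨅ (E : Set X) (_ : MeasurableSet E) (_ : 0 < μ E), dimH E) ∧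
    (essSup (lowerLocalDim dist μ) μ
        = ⨅ (E : Set X) (_ : MeasurableSet E) (_ : μ Eᶜ = 0), dimH E) ∧
    ((⨅ (E : Set X) (_ : MeasurableSet E) (_ : 0 < μ E), dimH E)
        ≤ ⨅ (E : Set X) (_ : MeasurableSet E) (_ : μ Eᶜ = 0), dimH E) :=
  essInf_essSup_lowerLocalDim_eq_hausdorffDims_general μ
end

section
/- Let X be a Polish metric space, let T : X → X be a continuous map, and let M(T) be the space of T-invariant Borel probability measures with the weak topology. For every α > 0, the set {μ ∈ M(T) : R̄(x) ≥ α for μ-a.e. x ∈ X} is a Gδ subset of M(T), and the set {μ ∈ M(T) : R̲(x) = 0 for μ-a.e. x ∈ X} is a Gδ subset of M(T). -/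
open Filter MeasureTheory Topology Metric Set
open scoped ENNReal NNReal

noncomputable section
attribute [local instance] Classical.propDecidable

end

/-! For `0 < r < 1` and `q ≥ 0`, `log τ_r(x) / (-log r) > q` says that `x` does not return to
`B̄(x,r)` before time `r^(-q)`: finitely many strict inequalities `r < d(Tⁿx, x)`, an open
condition on `x`. Dually, `< q` says that it does return before then; this is not open, but it
becomes open after trading `B̄(x,r)` for `B(x,√r)` and `q` for `2q`, which does not affect
`R̲ = 0`. With rational thresholds and a countable basis of `𝓝[>] 0`, the sets `{R̄ ≥ α}` and
`{R̲ = 0}` are then `Gδ` in `X`. For a `Gδ` set `S = ⋂ Uₙ`, `μ(S) = 1` means `μ(Uₙᶜ) < 1/m` for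
all `n, m`, and each of these conditions is open in the weak topology by the portmanteau
theorem. -/

section GδSets

variable {Ω : Type*} [TopologicalSpace Ω]

theorem isGδ_setOf_frequently {ι : Type*} {l : Filter ι} [l.IsCountablyGenerated]
    {P : ι → Ω → Prop} (hP : ∀ᶠ i in l, IsOpen {x | P i x}) :
    IsGδ {x | ∃ᶠ i in l, P i x} := by
  obtain ⟨s, hs⟩ := l.exists_antitone_basis
  have hset : {x | ∃ᶠ i in l, P i x} =
      ⋂ k, ⋃ i ∈ s k ∩ {i | IsOpen {x | P i x}}, {x | P i x} := by
    ext x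
    simp only [mem_ofPred_eq, mem_iInter, mem_iUnion, mem_inter_iff, exists_prop]
    refine ⟨fun h k => ?_, fun h => ?_⟩
    · obtain ⟨i, hi, hPi, hopen⟩ :=
        hs.toHasBasis.frequently_iff.mp (h.and_eventually hP) k trivial
      exact ⟨i, ⟨hi, hopen⟩, hPi⟩
    · refine hs.toHasBasis.frequently_iff.mpr fun k _ => ?_
      obtain ⟨i, ⟨hi, _⟩, hPi⟩ := h k
      exact ⟨i, hi, hPi⟩
  rw [hset]
  exact .iInter fun k => (isOpen_biUnion fun i hi => hi.2).isGδ

variable [MeasurableSpace Ω] [OpensMeasurableSpace Ω] [HasOuterApproxClosed Ω]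

theorem MeasureTheory.ProbabilityMeasure.isOpen_setOf_measure_lt {F : Set Ω} (hF : IsClosed F) (b : ℝ≥0∞) :
    IsOpen {μ : ProbabilityMeasure Ω | μ.toMeasure F < b} := by
  refine isOpen_iff_mem_nhds.mpr fun μ hμ => ?_
  have hlimsup := ProbabilityMeasure.limsup_measure_closed_le_of_tendsto (tendsto_id (x := 𝓝 μ)) hF
  exact eventually_lt_of_limsup_lt (hlimsup.trans_lt hμ)

theorem MeasureTheory.ProbabilityMeasure.isGδ_setOf_ae_mem {S : Set Ω} (hS : IsGδ S) :
    IsGδ {μ : ProbabilityMeasure Ω | ∀ᵐ x ∂μ.toMeasure, x ∈ S} := by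
  obtain ⟨U, hU, rfl⟩ := isGδ_iff_eq_iInter_nat.mp hS
  have hnull : ∀ (μ : ProbabilityMeasure Ω) n,
      μ.toMeasure (U n)ᶜ = 0 ↔ ∀ m : ℕ, μ.toMeasure (U n)ᶜ < (m : ℝ≥0∞)⁻¹ := by
    refine fun μ n => ⟨fun h m => h ▸ ENNReal.inv_pos.mpr (ENNReal.natCast_ne_top m),
      fun h => ?_⟩
    by_contra hne
    obtain ⟨m, hm⟩ := ENNReal.exists_inv_nat_lt hne
    exact (h m).not_gt hm
  have hset : {μ : ProbabilityMeasure Ω | ∀ᵐ x ∂μ.toMeasure, x ∈ ⋂ n, U n} =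
      ⋂ (n : ℕ) (m : ℕ), {μ | μ.toMeasure (U n)ᶜ < (m : ℝ≥0∞)⁻¹} := by
    ext μ
    simp only [mem_ofPred_eq, mem_iInter, ae_all_iff, ← hnull]
    exact forall_congr' fun n => ae_iff
  rw [hset]
  exact .iInter fun n => .iInter fun m =>
    (isOpen_setOf_measure_lt (hU n).isClosed_compl _).isGδ

end GδSets

section RationalThresholds

variable {ι : Type*} {l : Filter ι} {u : ι → ℝ≥0∞}

theorem ENNReal.le_limsup_iff_forall_rat {a : ℝ≥0∞} :
    a ≤ limsup u l ↔
      ∀ q : ℚ, 0 ≤ q → ENNReal.ofReal q < a → ∃ᶠ i in l, ENNReal.ofReal q < u i := by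
  rw [le_limsup_iff]
  refine ⟨fun h q _ hq => h _ hq, fun h y hy => ?_⟩
  obtain ⟨q, hq, hyq, hqa⟩ := ENNReal.lt_iff_exists_rat_btwn.mp hy
  exact (h q hq hqa).mono fun i hi => hyq.trans hi

theorem ENNReal.liminf_eq_zero_iff_forall_rat :
    liminf u l = 0 ↔ ∀ q : ℚ, 0 < q → ∃ᶠ i in l, u i < ENNReal.ofReal q := by
  rw [← nonpos_iff_eq_zero, liminf_le_iff]
  refine ⟨fun h q hq => h _ (ENNReal.ofReal_pos.mpr (Rat.cast_pos.mpr hq)), fun h y hy => ?_⟩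
  obtain ⟨q, -, hq, hqy⟩ := ENNReal.lt_iff_exists_rat_btwn.mp hy
  have hq' : (0 : ℝ) < q := ENNReal.ofReal_pos.mp hq
  exact (h q (Rat.cast_pos.mp hq')).mono fun i hi => hi.trans hqy

end RationalThresholds

section Recurrence

variable {X : Type*} [MetricSpace X] {T : X → X} {x : X} {r q : ℝ}

theorem lt_log_div_neg_log_iff (hr0 : 0 < r) (hr1 : r < 1) {τ : ℝ} (hτ : 0 < τ) :
    q < Real.log τ / -Real.log r ↔ r ^ (-q) < τ := by
  have hlog : 0 < -Real.log r := neg_pos.mpr (Real.log_neg hr0 hr1)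
  rw [lt_div_iff₀ hlog, ← Real.log_lt_log_iff (Real.rpow_pos_of_pos hr0 _) hτ,
    Real.log_rpow hr0]
  ring_nf

theorem log_div_neg_log_lt_iff (hr0 : 0 < r) (hr1 : r < 1) {τ : ℝ} (hτ : 0 < τ) :
    Real.log τ / -Real.log r < q ↔ τ < r ^ (-q) := by
  have hlog : 0 < -Real.log r := neg_pos.mpr (Real.log_neg hr0 hr1)
  rw [div_lt_iff₀ hlog, ← Real.log_lt_log_iff hτ (Real.rpow_pos_of_pos hr0 _),
    Real.log_rpow hr0]
  ring_nf

theorem ofReal_lt_recRatio_iff (hr0 : 0 < r) (hr1 : r < 1) (hq : 0 ≤ q) :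
    ENNReal.ofReal q < recRatio dist T x r ↔
      ∀ n : ℕ, 1 ≤ n → (n : ℝ) ≤ r ^ (-q) → r < dist (T^[n] x) x := by
  unfold recRatio
  split_ifs with h
  · have hτ := Nat.sInf_mem h
    set τ := sInf {n : ℕ | 1 ≤ n ∧ dist (T^[n] x) x ≤ r}
    have hτ0 : (0 : ℝ) < τ := by exact_mod_cast hτ.1
    rw [ENNReal.ofReal_lt_ofReal_iff_of_nonneg hq, lt_log_div_neg_log_iff hr0 hr1 hτ0]
    refine ⟨fun hlt n hn hnr => lt_of_not_ge fun hret => ?_, fun h' => lt_of_not_ge fun hτr =>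
      (h' τ hτ.1 hτr).not_ge hτ.2⟩
    have hτn : (τ : ℝ) ≤ n := Nat.cast_le.mpr (Nat.sInf_le ⟨hn, hret⟩)
    linarith
  · push Not at h
    exact iff_of_true ENNReal.ofReal_lt_top fun n hn _ => h n hn

theorem recRatio_lt_ofReal_iff (hr0 : 0 < r) (hr1 : r < 1) (hq : 0 < q) :
    recRatio dist T x r < ENNReal.ofReal q ↔
      ∃ n : ℕ, 1 ≤ n ∧ (n : ℝ) < r ^ (-q) ∧ dist (T^[n] x) x ≤ r := by
  unfold recRatio
  split_ifs with h
  · have hτ := Nat.sInf_mem h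
    set τ := sInf {n : ℕ | 1 ≤ n ∧ dist (T^[n] x) x ≤ r}
    have hτ0 : (0 : ℝ) < τ := by exact_mod_cast hτ.1
    rw [ENNReal.ofReal_lt_ofReal_iff hq, log_div_neg_log_lt_iff hr0 hr1 hτ0]
    refine ⟨fun hlt => ⟨τ, hτ.1, hlt, hτ.2⟩, fun ⟨n, hn, hnr, hret⟩ => ?_⟩
    have hτn : (τ : ℝ) ≤ n := Nat.cast_le.mpr (Nat.sInf_le ⟨hn, hret⟩)
    linarith
  · push Not at h
    exact iff_of_false (not_lt.mpr le_top) fun ⟨n, hn, _, hret⟩ => (h n hn).not_ge hret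

theorem lowerRecRate_eq_zero_iff :
    lowerRecRate dist T x = 0 ↔ ∀ q : ℚ, 0 < q →
      ∃ᶠ r in 𝓝[>] 0, ∃ n : ℕ, 1 ≤ n ∧ (n : ℝ) < r ^ (-(q : ℝ)) ∧ dist (T^[n] x) x < r := by
  have hunit : ∀ᶠ r in 𝓝[>] (0 : ℝ), r ∈ Ioo 0 1 := Ioo_mem_nhdsGT one_pos
  rw [lowerRecRate, ENNReal.liminf_eq_zero_iff_forall_rat]
  refine ⟨fun h q hq => ?_, fun h q hq => ?_⟩
  · have hsqrt : Tendsto Real.sqrt (𝓝[>] 0) (𝓝[>] 0) :=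
      tendsto_nhdsWithin_iff.mpr ⟨(Real.continuous_sqrt.tendsto' 0 0 Real.sqrt_zero).mono_left
        nhdsWithin_le_nhds, eventually_nhdsWithin_of_forall fun s hs => Real.sqrt_pos.mpr hs⟩
    refine hsqrt.frequently (((h (q / 2) (by positivity)).and_eventually hunit).mono
      fun s ⟨hs, hs0, hs1⟩ => ?_)
    obtain ⟨n, hn, hnr, hret⟩ := (recRatio_lt_ofReal_iff hs0 hs1 (by positivity)).mp hs
    refine ⟨n, hn, ?_, hret.trans_lt (Real.lt_sqrt hs0.le |>.mpr (by nlinarith))⟩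
    rwa [Real.sqrt_eq_rpow, ← Real.rpow_mul hs0.le,
      show (1 / 2 : ℝ) * -q = -((q / 2 : ℚ) : ℝ) by push_cast; ring]
  · exact ((h q hq).and_eventually hunit).mono fun r ⟨⟨n, hn, hnr, hret⟩, hr0, hr1⟩ =>
      (recRatio_lt_ofReal_iff hr0 hr1 (Rat.cast_pos.mpr hq)).mpr ⟨n, hn, hnr, hret.le⟩

variable (hT : Continuous T)
include hT

theorem isOpen_setOf_ofReal_lt_recRatio (hr0 : 0 < r) (hr1 : r < 1) (hq : 0 ≤ q) :
    IsOpen {x | ENNReal.ofReal q < recRatio dist T x r} := by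
  have hset : {x | ENNReal.ofReal q < recRatio dist T x r} =
      ⋂ n ∈ {n : ℕ | 1 ≤ n ∧ (n : ℝ) ≤ r ^ (-q)}, {x | r < dist (T^[n] x) x} := by
    ext x
    simp only [mem_ofPred_eq, mem_iInter, ofReal_lt_recRatio_iff hr0 hr1 hq, and_imp]
  rw [hset]
  refine Set.Finite.isOpen_biInter ((finite_le_nat ⌊r ^ (-q)⌋₊).subset fun n hn =>
    Nat.le_floor hn.2) fun n _ => isOpen_lt continuous_const ((hT.iterate n).dist continuous_id)

theorem isOpen_setOf_exists_return_lt (r s : ℝ) :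
    IsOpen {x | ∃ n : ℕ, 1 ≤ n ∧ (n : ℝ) < s ∧ dist (T^[n] x) x < r} := by
  simp only [ofPred_exists]
  exact isOpen_iUnion fun n => isOpen_const.and <| isOpen_const.and <|
    isOpen_lt ((hT.iterate n).dist continuous_id) continuous_const

theorem isGδ_setOf_le_upperRecRate (a : ℝ≥0∞) : IsGδ {x | a ≤ upperRecRate dist T x} := by
  have hset : {x | a ≤ upperRecRate dist T x} = ⋂ (q : ℚ) (_ : 0 ≤ q) (_ : ENNReal.ofReal q < a),
      {x | ∃ᶠ r in 𝓝[>] 0, ENNReal.ofReal q < recRatio dist T x r} := by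
    ext x
    simp only [mem_ofPred_eq, mem_iInter, upperRecRate, ENNReal.le_limsup_iff_forall_rat]
  rw [hset]
  exact .iInter fun q => .iInter fun hq => .iInter fun _ => isGδ_setOf_frequently <|
    Eventually.mono (Ioo_mem_nhdsGT one_pos) fun r hr =>
      isOpen_setOf_ofReal_lt_recRatio hT hr.1 hr.2 (Rat.cast_nonneg.mpr hq)

theorem isGδ_setOf_lowerRecRate_eq_zero : IsGδ {x | lowerRecRate dist T x = 0} := by
  simp only [lowerRecRate_eq_zero_iff, ofPred_forall]
  exact .iInter fun q => .iInter fun _ => isGδ_setOf_frequently <|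
    .of_forall fun r => isOpen_setOf_exists_return_lt hT r _

end Recurrence

theorem recurrenceRate_sets_Gδ_general {X : Type*} [MetricSpace X] [MeasurableSpace X] [BorelSpace X]
    (T : X → X) (hT : Continuous T) (α : ℝ) :
    IsGδ {μ : {ν : ProbabilityMeasure X // ν.toMeasure.map T = ν.toMeasure} |
        ∀ᵐ x ∂μ.1.toMeasure, ENNReal.ofReal α ≤ upperRecRate dist T x} ∧
    IsGδ {μ : {ν : ProbabilityMeasure X // ν.toMeasure.map T = ν.toMeasure} |
        ∀ᵐ x ∂μ.1.toMeasure, lowerRecRate dist T x = 0} :=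
  ⟨(ProbabilityMeasure.isGδ_setOf_ae_mem (isGδ_setOf_le_upperRecRate hT _)).preimage
      continuous_subtype_val,
    (ProbabilityMeasure.isGδ_setOf_ae_mem (isGδ_setOf_lowerRecRate_eq_zero hT)).preimage
      continuous_subtype_val⟩

/-- Let `X` be a Polish metric space and `T : X → X` continuous. For every
`α > 0`, the set of `T`-invariant Borel probability measures with `R̄(x) ≥ α` `μ`-a.e. is a
`Gδ` subset of `M(T)`, and the set of those with `R̲(x) = 0` `μ`-a.e. is a `Gδ` subset of
`M(T)`. -/
theorem recurrenceRate_sets_Gδ {X : Type*} [MetricSpace X] [CompleteSpace X]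
    [TopologicalSpace.SeparableSpace X] [MeasurableSpace X] [BorelSpace X]
    (T : X → X) (hT : Continuous T) (α : ℝ) (hα : 0 < α) :
    IsGδ {μ : {ν : ProbabilityMeasure X // ν.toMeasure.map T = ν.toMeasure} |
        ∀ᵐ x ∂μ.1.toMeasure, ENNReal.ofReal α ≤ upperRecRate dist T x} ∧
    IsGδ {μ : {ν : ProbabilityMeasure X // ν.toMeasure.map T = ν.toMeasure} |
        ∀ᵐ x ∂μ.1.toMeasure, lowerRecRate dist T x = 0} :=
  recurrenceRate_sets_Gδ_general T hT α
end
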